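/- Fix k > 0 and L > 0. Then the function λ ↦ (1/k)·(artanh(k/λ) − artanh((k/λ)·cos(L·√(λ² − k²)/4))) tends to (1/(2k))·log(1 + L²·k²/16) as λ tends to k from the right (i.e. the limit along the filter 𝓝[>] k is 𝓝 ((1/(2k))·log(1 + L²·k²/16))). -/

import Mathlib

open Topology

/-- The inverse hyperbolic tangent, `artanh x = (1/2)·log ((1 + x)/(1 − x))`. -/
noncomputable def Real.artanhLog (x : ℝ) : ℝ := Real.log ((1 + x) / (1 - x)) / 2

/-!
Put `a = k/λ`, `s = √(λ² − k²)` and `c = cos (L s / 4)`. The bound equals `(1/(2k)) log Q` with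
`Q = (1 + a)(1 − a c) / ((1 − a)(1 + a c))`, and `Q` has a removable singularity at `λ = k`: writing
`1 − c = (L s / 4)² / 2 · sinc (L s / 8)²` and `λ − k = s² / (λ + k)`,
`Q = (λ + k)/(λ + k c) · (1 + k (λ + k) L² / 32 · sinc (L s / 8)²)`,
which is continuous in `λ` and equals `1 + L² k² / 16` at `λ = k`.
-/

namespace Real

theorem one_sub_cos_eq_sq_mul_sinc_sq (x : ℝ) : 1 - cos x = x ^ 2 / 2 * sinc (x / 2) ^ 2 := by
  rcases eq_or_ne x 0 with rfl | hx
  · simp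
  have hx2 : x / 2 ≠ 0 := by positivity
  have hcos : cos x = 1 - 2 * sin (x / 2) ^ 2 := by
    have h := cos_two_mul' (x / 2)
    rw [show 2 * (x / 2) = x by ring] at h
    linarith [sin_sq_add_cos_sq (x / 2)]
  rw [sinc_of_ne_zero hx2, hcos]
  field_simp
  ring

theorem artanhLog_sub_artanhLog {x y : ℝ} (hx : |x| < 1) (hy : |y| < 1) :
    artanhLog x - artanhLog y = log ((1 + x) * (1 - y) / ((1 - x) * (1 + y))) / 2 := by
  obtain ⟨hx₁, hx₂⟩ := abs_lt.mp hx
  obtain ⟨hy₁, hy₂⟩ := abs_lt.mp hy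
  have hX : 0 < (1 + x) / (1 - x) := div_pos (by linarith) (by linarith)
  have hY : 0 < (1 + y) / (1 - y) := div_pos (by linarith) (by linarith)
  rw [artanhLog, artanhLog, ← sub_div, ← log_div hX.ne' hY.ne']
  congr 2
  field_simp

end Real

open Real

noncomputable def hyperbolicBoundRatio (k L lam : ℝ) : ℝ :=
  (lam + k) / (lam + k * cos (L * √(lam ^ 2 - k ^ 2) / 4)) *
    (1 + k * (lam + k) * L ^ 2 / 32 * sinc (L * √(lam ^ 2 - k ^ 2) / 8) ^ 2)

theorem hyperbolicBoundRatio_self {k : ℝ} (hk : k ≠ 0) (L : ℝ) :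
    hyperbolicBoundRatio k L k = 1 + L ^ 2 * k ^ 2 / 16 := by
  simp only [hyperbolicBoundRatio, sub_self, sqrt_zero, mul_zero, zero_div, cos_zero, sinc_zero]
  field_simp
  ring

theorem continuousAt_hyperbolicBoundRatio {k : ℝ} (hk : k ≠ 0) (L : ℝ) :
    ContinuousAt (hyperbolicBoundRatio k L) k := by
  have hden : k + k * cos (L * √(k ^ 2 - k ^ 2) / 4) ≠ 0 := by
    simp only [sub_self, sqrt_zero, mul_zero, zero_div, cos_zero, mul_one, ← two_mul]
    positivity
  unfold hyperbolicBoundRatio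
  fun_prop (disch := exact hden)

theorem hyperbolic_bound_eq_log_hyperbolicBoundRatio {k L lam : ℝ} (hk : 0 < k) (hlam : k < lam) :
    (1 / k) * (artanhLog (k / lam) - artanhLog ((k / lam) * cos (L * √(lam ^ 2 - k ^ 2) / 4))) =
      (1 / (2 * k)) * log (hyperbolicBoundRatio k L lam) := by
  rw [hyperbolicBoundRatio]
  set s := √(lam ^ 2 - k ^ 2)
  set c := cos (L * s / 4)
  have hs : s ^ 2 = lam ^ 2 - k ^ 2 := sq_sqrt (by nlinarith)
  have hc : 1 - c = (L * s / 4) ^ 2 / 2 * sinc (L * s / 8) ^ 2 := by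
    rw [one_sub_cos_eq_sq_mul_sinc_sq]; ring_nf
  have hlam₀ : 0 < lam := hk.trans hlam
  have ha : 0 < k / lam ∧ k / lam < 1 := ⟨by positivity, (div_lt_one hlam₀).mpr hlam⟩
  have hc₁ : |c| ≤ 1 := abs_cos_le_one _
  have hac : |k / lam * c| < 1 := by
    rw [abs_mul, abs_of_pos ha.1]; nlinarith [abs_nonneg c]
  have hden : lam + k * c ≠ 0 := by nlinarith [neg_abs_le c]
  have hlk : lam - k ≠ 0 := by linarith
  have key : (1 + k / lam) * (1 - k / lam * c) / ((1 - k / lam) * (1 + k / lam * c)) =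
      (lam + k) / (lam + k * c) * (1 + k * (lam + k) * L ^ 2 / 32 * sinc (L * s / 8) ^ 2) := by
    field_simp
    linear_combination 32 * k * hc + k * L ^ 2 * sinc (L * s / 8) ^ 2 * hs
  rw [artanhLog_sub_artanhLog (by rw [abs_of_pos ha.1]; exact ha.2) hac, key]
  ring

theorem tendsto_hyperbolic_bound_lambda_to_k_from_right_general
    (k L : ℝ) (hk : 0 < k) :
    Filter.Tendsto
      (fun lam : ℝ => (1 / k) *
        (Real.artanhLog (k / lam) -
          Real.artanhLog ((k / lam) * Real.cos (L * Real.sqrt (lam ^ 2 - k ^ 2) / 4))))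
      (𝓝[>] k)
      (𝓝 ((1 / (2 * k)) * Real.log (1 + L ^ 2 * k ^ 2 / 16))) := by
  have hQ := continuousAt_hyperbolicBoundRatio hk.ne' L
  have hQk := hyperbolicBoundRatio_self hk.ne' L
  have hlim : Filter.Tendsto (fun lam ↦ 1 / (2 * k) * log (hyperbolicBoundRatio k L lam))
      (𝓝[>] k) (𝓝 (1 / (2 * k) * log (1 + L ^ 2 * k ^ 2 / 16))) := by
    rw [← hQk]
    exact ((hQ.log (by rw [hQk]; positivity)).const_mul _).tendsto.mono_left nhdsWithin_le_nhds
  refine hlim.congr' ?_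
  filter_upwards [self_mem_nhdsWithin] with lam hlam
  exact (hyperbolic_bound_eq_log_hyperbolicBoundRatio hk hlam).symm

/-- **Phase transition `λ → k⁺` in the hyperbolic inradius bound.**
For fixed `k > 0` and `L > 0`, the right-hand side of the bound for `λ > k` tends to the
right-hand side of the bound for `λ = k` as `λ → k` from the right. -/
theorem tendsto_hyperbolic_bound_lambda_to_k_from_right
    (k L : ℝ) (hk : 0 < k) (hL : 0 < L) :
    Filter.Tendsto
      (fun lam : ℝ => (1 / k) *
        (Real.artanhLog (k / lam) -
          Real.artanhLog ((k / lam) * Real.cos (L * Real.sqrt (lam ^ 2 - k ^ 2) / 4))))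
      (𝓝[>] k)
      (𝓝 ((1 / (2 * k)) * Real.log (1 + L ^ 2 * k ^ 2 / 16))) :=
  tendsto_hyperbolic_bound_lambda_to_k_from_right_general k L hk
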